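/- The hohh proof system admits an instantiation lemma: if Ξ; Γ ⊢ G[c/x] is derivable where c ∈ Ξ is a constant not occurring in Γ or G, then for any Ξ-term t of the same type as c, Ξ; Γ ⊢ G[t/x] is derivable, with a derivation of the same height. -/

import Mathlib

/- Simple types for the hohh logic (o is the type of propositions). -/
inductive Ty : Type where
  | o : Ty
  | base : Nat → Ty
  | arr : Ty → Ty → Ty

/- Simply typed λ-terms over a signature of constants (de Bruijn variables). -/
inductive Tm : Type where
  | const : Nat → Tm
  | var : Nat → Tm
  | app : Tm → Tm → Tm
  | lam : Ty → Tm → Tm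

def liftTm (d : Nat) : Tm → Tm
  | .const c => .const c
  | .var k => if k < d then .var k else .var (k+1)
  | .app m n => .app (liftTm d m) (liftTm d n)
  | .lam τ m => .lam τ (liftTm (d+1) m)

def substTm (d : Nat) (s : Tm) : Tm → Tm
  | .const c => .const c
  | .var k => if k = d then s else if d < k then .var (k-1) else .var k
  | .app m n => .app (substTm d s m) (substTm d s n)
  | .lam τ m => .lam τ (substTm (d+1) (liftTm 0 s) m)

def constsOf : Tm → List Nat
  | .const c => [c]
  | .var _ => []
  | .app m n => constsOf m ++ constsOf n
  | .lam _ m => constsOf m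

/- hohh formulas: ⊤, atoms, implication, universal quantification. -/
inductive Fm : Type where
  | top : Fm
  | atom : Tm → Fm
  | imp : Fm → Fm → Fm
  | all : Ty → Fm → Fm

def substFm (d : Nat) (s : Tm) : Fm → Fm
  | .top => .top
  | .atom t => .atom (substTm d s t)
  | .imp f g => .imp (substFm d s f) (substFm d s g)
  | .all τ f => .all τ (substFm (d+1) (liftTm 0 s) f)

def constsOfFm : Fm → List Nat
  | .top => []
  | .atom t => constsOf t
  | .imp f g => constsOfFm f ++ constsOfFm g
  | .all _ f => constsOfFm f

/- Goal (G) and program-clause (D) formulas. -/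
mutual
inductive IsG : Fm → Prop where
  | top : IsG .top
  | atom : IsG (.atom t)
  | imp : IsD D → IsG G → IsG (.imp D G)
  | all : IsG G → IsG (.all τ G)
inductive IsD : Fm → Prop where
  | atom : IsD (.atom t)
  | imp : IsG G → IsD D → IsD (.imp G D)
  | all : IsD D → IsD (.all τ D)
end

/- A Ξ-term: all its constants come from the signature Ξ. -/
def XiTm (Ξ : Finset Nat) (t : Tm) : Prop := ∀ c ∈ constsOf t, c ∈ Ξ

/- The hohh proof system: goal-reduction rules (⊤R, ⊃R, ∀R) and backchaining. -/
mutual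
inductive HSeq : Finset Nat → Set Fm → Fm → Prop where
  | top : HSeq Ξ Γ .top
  | impR : HSeq Ξ (insert D Γ) G → HSeq Ξ Γ (.imp D G)
  | allR : c ∉ Ξ → HSeq (insert c Ξ) Γ (substFm 0 (.const c) G) →
      HSeq Ξ Γ (.all τ G)
  | bc : D ∈ Γ → Focus Ξ Γ D t → HSeq Ξ Γ (.atom t)
inductive Focus : Finset Nat → Set Fm → Fm → Tm → Prop where
  | init : Focus Ξ Γ (.atom t) t
  | imp : HSeq Ξ Γ G → Focus Ξ Γ D t → Focus Ξ Γ (.imp G D) t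
  | all : XiTm Ξ s → Focus Ξ Γ (substFm 0 s D) t → Focus Ξ Γ (.all τ D) t
end

/- Typing of terms over the signature typing cs. -/
inductive HasTyS (cs : Nat → Ty) : List Ty → Tm → Ty → Prop where
  | const : HasTyS cs Γ (.const c) (cs c)
  | var : Γ[k]? = some τ → HasTyS cs Γ (.var k) τ
  | app : HasTyS cs Γ m (.arr τ σ) → HasTyS cs Γ n τ → HasTyS cs Γ (.app m n) σ
  | lam : HasTyS cs (τ :: Γ) m σ → HasTyS cs Γ (.lam τ m) (.arr τ σ)

/- Height-indexed version of the hohh proof system. -/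
mutual
inductive SeqH : Nat → Finset Nat → Set Fm → Fm → Prop where
  | top : SeqH 1 Ξ Γ .top
  | impR : SeqH n Ξ (insert D Γ) G → SeqH (n+1) Ξ Γ (.imp D G)
  | allR : c ∉ Ξ → SeqH n (insert c Ξ) Γ (substFm 0 (.const c) G) →
      SeqH (n+1) Ξ Γ (.all τ G)
  | bc : D ∈ Γ → FocusH n Ξ Γ D t → SeqH (n+1) Ξ Γ (.atom t)
inductive FocusH : Nat → Finset Nat → Set Fm → Fm → Tm → Prop where
  | init : FocusH 1 Ξ Γ (.atom t) t
  | imp : SeqH m Ξ Γ G → FocusH n Ξ Γ D t → FocusH (max m n + 1) Ξ Γ (.imp G D) t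
  | all : XiTm Ξ s → FocusH n Ξ Γ (substFm 0 s D) t → FocusH (n+1) Ξ Γ (.all τ D) t
end

/-!
Replacing the constant `c` by the closed term `t` everywhere maps derivations to derivations of
the same height: it commutes with de Bruijn lifting and substitution because `t` has no free
variables, it keeps Ξ-terms Ξ-terms because `t` is one, and it fixes the eigenvariables of `∀R`,
which lie outside Ξ ∋ c. Applied to a derivation of `G[c/x]` whose program and goal do not
mention `c`, it yields a derivation of `G[t/x]`.
-/

namespace Tm

def VarsLt : Nat → Tm → Prop
  | _, .const _ => True
  | d, .var k => k < d
  | d, .app m n => VarsLt d m ∧ VarsLt d n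
  | d, .lam _ m => VarsLt (d+1) m

def replaceConst (c : Nat) (t : Tm) : Tm → Tm
  | .const k => if k = c then t else .const k
  | .var k => .var k
  | .app m n => .app (replaceConst c t m) (replaceConst c t n)
  | .lam τ m => .lam τ (replaceConst c t m)

theorem liftTm_of_varsLt {m : Tm} {d e : Nat} (hm : m.VarsLt d) (hde : d ≤ e) :
    liftTm e m = m := by
  induction m generalizing d e with
  | const k => rfl
  | var k => simp only [VarsLt] at hm; simp [liftTm]; omega
  | app a b iha ihb => simp [liftTm, iha hm.1 hde, ihb hm.2 hde]
  | lam τ a ih => simp [liftTm, ih (d := d + 1) (e := e + 1) hm (by omega)]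

theorem substTm_of_varsLt {m : Tm} {d e : Nat} (s : Tm) (hm : m.VarsLt d) (hde : d ≤ e) :
    substTm e s m = m := by
  induction m generalizing d e s with
  | const k => rfl
  | var k =>
    simp only [VarsLt] at hm
    simp only [substTm]
    rw [if_neg (by omega), if_neg (by omega)]
  | app a b iha ihb => simp [substTm, iha s hm.1 hde, ihb s hm.2 hde]
  | lam τ a ih => simp [substTm, ih (d := d + 1) (e := e + 1) _ hm (by omega)]

section replaceConst

variable {c : Nat} {t : Tm}

@[simp]
theorem replaceConst_const_self : replaceConst c t (.const c) = t := by
  simp [replaceConst]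

theorem replaceConst_const_of_ne {k : Nat} (hk : k ≠ c) :
    replaceConst c t (.const k) = .const k := by
  simp [replaceConst, hk]

theorem replaceConst_of_not_mem {m : Tm} (hm : c ∉ constsOf m) : replaceConst c t m = m := by
  induction m with
  | const k => exact replaceConst_const_of_ne fun h => hm (by simp [constsOf, h])
  | var k => rfl
  | app a b iha ihb =>
    simp only [constsOf, List.mem_append, not_or] at hm
    simp [replaceConst, iha hm.1, ihb hm.2]
  | lam τ a ih => simp [replaceConst, ih hm]

theorem mem_constsOf_replaceConst {m : Tm} {k : Nat} (hk : k ∈ constsOf (replaceConst c t m)) :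
    k ∈ constsOf m ∨ k ∈ constsOf t := by
  induction m with
  | const j =>
    by_cases hj : j = c
    · simp_all [replaceConst]
    · simp_all [replaceConst, constsOf]
  | var j => simp [replaceConst, constsOf] at hk
  | app a b iha ihb =>
    simp only [replaceConst, constsOf, List.mem_append] at hk ⊢
    rcases hk with hk | hk
    · rcases iha hk with h | h <;> simp [h]
    · rcases ihb hk with h | h <;> simp [h]
  | lam τ a ih => exact ih hk

theorem liftTm_replaceConst (ht : t.VarsLt 0) (m : Tm) (d : Nat) :
    liftTm d (replaceConst c t m) = replaceConst c t (liftTm d m) := by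
  induction m generalizing d with
  | const k =>
    by_cases hk : k = c
    · simp [replaceConst, liftTm, hk, liftTm_of_varsLt ht (Nat.zero_le d)]
    · simp [replaceConst, liftTm, hk]
  | var k => simp only [replaceConst, liftTm]; split_ifs <;> rfl
  | app a b iha ihb => simp [replaceConst, liftTm, iha, ihb]
  | lam τ a ih => simp [replaceConst, liftTm, ih]

theorem replaceConst_substTm (ht : t.VarsLt 0) (m : Tm) (d : Nat) (s : Tm) :
    replaceConst c t (substTm d s m) = substTm d (replaceConst c t s) (replaceConst c t m) := by
  induction m generalizing d s with
  | const k =>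
    by_cases hk : k = c
    · simp [replaceConst, substTm, hk, substTm_of_varsLt _ ht (Nat.zero_le d)]
    · simp [replaceConst, substTm, hk]
  | var k => simp only [substTm, replaceConst]; split_ifs <;> rfl
  | app a b iha ihb => simp [replaceConst, substTm, iha, ihb]
  | lam τ a ih => simp [replaceConst, substTm, ih, liftTm_replaceConst ht]

end replaceConst

end Tm

theorem HasTyS.varsLt {cs : Nat → Ty} {Γ : List Ty} {m : Tm} {τ : Ty} (h : HasTyS cs Γ m τ) :
    m.VarsLt Γ.length := by
  induction h with
  | const => trivial
  | var h => exact (List.getElem?_eq_some_iff.mp h).1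
  | app _ _ ih₁ ih₂ => exact ⟨ih₁, ih₂⟩
  | lam _ ih => exact ih

namespace Fm

def replaceConst (c : Nat) (t : Tm) : Fm → Fm
  | .top => .top
  | .atom u => .atom (Tm.replaceConst c t u)
  | .imp f g => .imp (replaceConst c t f) (replaceConst c t g)
  | .all τ f => .all τ (replaceConst c t f)

variable {c : Nat} {t : Tm}

theorem replaceConst_of_not_mem {f : Fm} (hf : c ∉ constsOfFm f) : replaceConst c t f = f := by
  induction f with
  | top => rfl
  | atom u => simp [replaceConst, Tm.replaceConst_of_not_mem hf]
  | imp f g ihf ihg =>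
    simp only [constsOfFm, List.mem_append, not_or] at hf
    simp [replaceConst, ihf hf.1, ihg hf.2]
  | all τ f ih => simp [replaceConst, ih hf]

theorem image_replaceConst_of_not_mem {Γ : Set Fm} (hΓ : ∀ D ∈ Γ, c ∉ constsOfFm D) :
    replaceConst c t '' Γ = Γ := by
  rw [Set.image_congr fun D hD => replaceConst_of_not_mem (hΓ D hD), Set.image_id']

theorem replaceConst_substFm (ht : t.VarsLt 0) (f : Fm) (d : Nat) (s : Tm) :
    replaceConst c t (substFm d s f) = substFm d (Tm.replaceConst c t s) (replaceConst c t f) := by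
  induction f generalizing d s with
  | top => rfl
  | atom u => simp [replaceConst, substFm, Tm.replaceConst_substTm ht]
  | imp f g ihf ihg => simp [replaceConst, substFm, ihf, ihg]
  | all τ f ih => simp [replaceConst, substFm, ih, Tm.liftTm_replaceConst ht]

end Fm

theorem XiTm.replaceConst {Ξ : Finset Nat} {c : Nat} {s t : Tm} (hs : XiTm Ξ s) (ht : XiTm Ξ t) :
    XiTm Ξ (Tm.replaceConst c t s) := fun k hk =>
  (Tm.mem_constsOf_replaceConst hk).elim (hs k) (ht k)

theorem XiTm.insert {Ξ : Finset Nat} {t : Tm} (c : Nat) (ht : XiTm Ξ t) :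
    XiTm (insert c Ξ) t := fun k hk => Finset.mem_insert_of_mem (ht k hk)

section replaceConst

variable {c : Nat} {t : Tm}

mutual

theorem SeqH.replaceConst (htc : t.VarsLt 0) {n : Nat} {Ξ : Finset Nat} {Γ : Set Fm} {F : Fm}
    (h : SeqH n Ξ Γ F) (hc : c ∈ Ξ) (ht : XiTm Ξ t) :
    SeqH n Ξ (Fm.replaceConst c t '' Γ) (F.replaceConst c t) :=
  match h with
  | .top => .top
  | .impR h => by
    have h' := h.replaceConst htc hc ht
    rw [Set.image_insert_eq] at h'
    exact .impR h'
  | .allR (c := c') hc' h => by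
    have h' := h.replaceConst htc (Finset.mem_insert_of_mem hc) (ht.insert c')
    have hne : c' ≠ c := fun hcc => hc' (hcc ▸ hc)
    rw [Fm.replaceConst_substFm htc, Tm.replaceConst_const_of_ne hne] at h'
    exact .allR hc' h'
  | .bc hD h => .bc (Set.mem_image_of_mem _ hD) (h.replaceConst htc hc ht)

theorem FocusH.replaceConst (htc : t.VarsLt 0) {n : Nat} {Ξ : Finset Nat} {Γ : Set Fm}
    {D : Fm} {u : Tm} (h : FocusH n Ξ Γ D u) (hc : c ∈ Ξ) (ht : XiTm Ξ t) :
    FocusH n Ξ (Fm.replaceConst c t '' Γ) (D.replaceConst c t) (Tm.replaceConst c t u) :=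
  match h with
  | .init => .init
  | .imp hG hD => .imp (hG.replaceConst htc hc ht) (hD.replaceConst htc hc ht)
  | .all hs h => by
    have h' := h.replaceConst htc hc ht
    rw [Fm.replaceConst_substFm htc] at h'
    exact .all (hs.replaceConst ht) h'

end

end replaceConst

/-- Instantiation lemma for hohh: a constant c ∈ Ξ not occurring in the program
    Γ or the goal G can be replaced by any closed Ξ-term t of the same type,
    yielding a derivation of the same height. -/
theorem hohh_instantiation
    (cs : Nat → Ty) (n : Nat) (Ξ : Finset Nat) (Γ : Set Fm) (G : Fm)
    (c : Nat) (t : Tm)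
    (hder : SeqH n Ξ Γ (substFm 0 (.const c) G))
    (hc : c ∈ Ξ)
    (hΓ : ∀ D ∈ Γ, c ∉ constsOfFm D)
    (hG : c ∉ constsOfFm G)
    (ht : XiTm Ξ t)
    (hty : HasTyS cs [] t (cs c)) :
    SeqH n Ξ Γ (substFm 0 t G) := by
  have h := hder.replaceConst hty.varsLt hc ht
  rwa [Fm.replaceConst_substFm hty.varsLt, Tm.replaceConst_const_self,
    Fm.replaceConst_of_not_mem hG, Fm.image_replaceConst_of_not_mem hΓ] at h
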